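/- arXiv:2007.02775 — 7 statements merged into one kernel-verified Lean document; each statement's English description precedes it below -/
import Mathlib

section
/- For every integer p ≥ 1, ∫_{-π}^{π} K_p(e^{iθ}) dθ = -2pπ, where K_p(s) = (s^p - 1 - i p·Im(s))/(1 - Re(s)) for s on the unit circle with s ≠ 1, extended by K_p(1) = -p². -/
open Real Complex

noncomputable def Kp (p : ℕ) (s : ℂ) : ℂ :=
  if s = 1 then -((p : ℂ) ^ 2)
  else (s ^ p - 1 - Complex.I * (p : ℂ) * (s.im : ℂ)) / ((1 : ℂ) - (s.re : ℂ))

lemma claimA (s : ℂ) (p : ℕ) :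
    2*s*(s^p - 1) - (p:ℂ)*(s^2-1) =
      (1-s)^2 * ∑ k ∈ Finset.range p, (1 + 2 * ∑ j ∈ Finset.range k, s^(j+1)) := by
  induction p with
  | zero => simp
  | succ n ih =>
    rw [Finset.sum_range_succ]
    have hg := geom_sum_mul s n
    have hshift : ∑ j ∈ Finset.range n, s^(j+1) = s * ∑ j ∈ Finset.range n, s^j := by
      rw [Finset.mul_sum]; exact Finset.sum_congr rfl (fun i _ => by ring)
    rw [hshift]
    push_cast
    linear_combination ih + 2*s*(1-s)*hg

lemma hint_exp (n : ℕ) : (∫ θ : ℝ in (-π)..π, Complex.exp ((((n:ℂ)+1) * Complex.I) * θ)) = 0 := by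
  have hc : ((n:ℂ)+1) * Complex.I ≠ 0 :=
    mul_ne_zero (Nat.cast_add_one_ne_zero n) Complex.I_ne_zero
  rw [integral_exp_mul_complex hc]
  have : Complex.exp (((n:ℂ)+1) * Complex.I * (π:ℝ)) =
      Complex.exp (((n:ℂ)+1) * Complex.I * ((-π:ℝ))) := by
    rw [Complex.exp_eq_exp_iff_exists_int]
    exact ⟨n+1, by push_cast; ring⟩
  rw [this, sub_self, zero_div]

lemma Kp_eq (p : ℕ) (θ : ℝ) :
    Kp p (Complex.exp (Complex.I * θ)) =
      -(p:ℂ) - 2 * ∑ k ∈ Finset.range p, ∑ j ∈ Finset.range k,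
        Complex.exp (Complex.I * θ) ^ (j+1) := by
  set s := Complex.exp (Complex.I * θ) with hsdef
  have hre : ((s.re : ℝ) : ℂ) = ((Real.cos θ : ℝ) : ℂ) := by
    rw [hsdef, mul_comm, Complex.exp_ofReal_mul_I_re]
  have him : ((s.im : ℝ) : ℂ) = ((Real.sin θ : ℝ) : ℂ) := by
    rw [hsdef, mul_comm, Complex.exp_ofReal_mul_I_im]
  have hs_eq : s = ((Real.cos θ : ℝ) : ℂ) + ((Real.sin θ : ℝ) : ℂ) * Complex.I := by
    rw [hsdef, mul_comm, Complex.exp_mul_I, Complex.ofReal_cos, Complex.ofReal_sin]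
  set c : ℂ := ((Real.cos θ : ℝ) : ℂ)
  set d : ℂ := ((Real.sin θ : ℝ) : ℂ)
  have hpyth : c^2 + d^2 = 1 := by
    show ((Real.cos θ : ℝ) : ℂ)^2 + ((Real.sin θ : ℝ) : ℂ)^2 = 1
    norm_cast
    linarith [Real.sin_sq_add_cos_sq θ]
  by_cases hs : s = 1
  · rw [Kp, if_pos hs, hs]
    simp only [one_pow, Finset.sum_const, Finset.card_range, nsmul_eq_mul, mul_one]
    have hgauss : ∀ n : ℕ, (∑ k ∈ Finset.range n, (k:ℂ)) * 2 = (n:ℂ)^2 - n := by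
      intro n
      induction n with
      | zero => simp
      | succ m ih =>
        rw [Finset.sum_range_succ]
        push_cast
        linear_combination ih
    linear_combination hgauss p
  · rw [Kp, if_neg hs, hre, him]
    have hden : (1:ℂ) - c ≠ 0 := by
      intro h
      have hc1 : c = 1 := by linear_combination -h
      have hd0 : d ^ 2 = 0 := by linear_combination hpyth - (c+1) * hc1
      have hd : d = 0 := by
        exact pow_eq_zero_iff (n := 2) (by norm_num) |>.mp hd0
      exact hs (by rw [hs_eq, hc1, hd]; ring)
    rw [div_eq_iff hden]
    have hs0 : (2:ℂ) * s ≠ 0 := by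
      apply mul_ne_zero (by norm_num)
      rw [hsdef]; exact Complex.exp_ne_zero _
    have hT : ∑ k ∈ Finset.range p, ((1:ℂ) + 2 * ∑ j ∈ Finset.range k, s^(j+1))
        = (p:ℂ) + 2 * ∑ k ∈ Finset.range p, ∑ j ∈ Finset.range k, s^(j+1) := by
      rw [Finset.sum_add_distrib, ← Finset.mul_sum]
      simp
    have hA := claimA s p
    rw [hT] at hA
    have hI : Complex.I ^ 2 = -1 := Complex.I_sq
    rw [hs_eq] at hA hs0 ⊢
    apply mul_left_cancel₀ hs0
    set SS : ℂ := ∑ k ∈ Finset.range p, ∑ j ∈ Finset.range k, (c + d*Complex.I)^(j+1) with hSS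
    linear_combination hA - 2*SS*hpyth + 2*SS*d^2*hI

lemma hpow (n : ℕ) (θ : ℝ) :
    Complex.exp (Complex.I * θ) ^ (n+1) = Complex.exp ((((n:ℂ)+1) * Complex.I) * θ) := by
  rw [← Complex.exp_nat_mul]
  congr 1
  push_cast
  ring

theorem stmt_3 (p : ℕ) (hp : 1 ≤ p) :
    ∫ θ in (-π)..π, Kp p (Complex.exp (Complex.I * (θ : ℂ))) = -(2 * p * π) := by
  have hcongr : (∫ θ in (-π)..π, Kp p (Complex.exp (Complex.I * (θ : ℂ))))
      = ∫ θ in (-π)..π, (-(p:ℂ) - 2 * ∑ k ∈ Finset.range p, ∑ j ∈ Finset.range k,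
          Complex.exp ((((j:ℂ)+1) * Complex.I) * θ)) := by
    apply intervalIntegral.integral_congr
    intro θ _
    simp only [Kp_eq p θ, hpow]
  rw [hcongr]
  have hie : ∀ n : ℕ, IntervalIntegrable
      (fun θ : ℝ => Complex.exp ((((n:ℂ)+1) * Complex.I) * θ)) MeasureTheory.volume (-π) π := by
    intro n
    apply Continuous.intervalIntegrable
    fun_prop
  have hsumint : IntervalIntegrable
      (fun θ : ℝ => 2 * ∑ k ∈ Finset.range p, ∑ j ∈ Finset.range k,
        Complex.exp ((((j:ℂ)+1) * Complex.I) * θ)) MeasureTheory.volume (-π) π := by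
    apply Continuous.intervalIntegrable
    fun_prop
  rw [intervalIntegral.integral_sub (intervalIntegrable_const) hsumint,
    intervalIntegral.integral_const_mul,
    intervalIntegral.integral_finset_sum (fun k _ => Continuous.intervalIntegrable (by fun_prop) _ _)]
  have hz : ∀ k ∈ Finset.range p,
      (∫ θ : ℝ in (-π)..π, ∑ j ∈ Finset.range k,
        Complex.exp ((((j:ℂ)+1) * Complex.I) * θ)) = 0 := by
    intro k _
    rw [intervalIntegral.integral_finset_sum (fun j _ => hie j)]
    exact Finset.sum_eq_zero fun j _ => hint_exp j
  rw [Finset.sum_congr rfl hz]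
  simp
  push_cast
  ring
end

section
/- For every integer p ≥ 1 and every s on the unit circle with s ≠ 1, the imaginary part of K_p(s) = (s^p - 1 - i p·Im(s))/(1 - Re(s)) satisfies |Im K_p(s)| ≤ p³. -/
/-!
Since `Im (i p Im s) = p Im s = Im (p (s - 1))`, the imaginary part of the numerator is that of
`s ^ p - 1 - p (s - 1)`, the remainder of the first-order expansion of `s ^ p` at `1`. For
`‖s‖ ≤ 1` this remainder has norm at most `p (p - 1) / 2 * ‖s - 1‖ ^ 2`, and on the unit circle
`‖s - 1‖ ^ 2 = 2 (1 - Re s)`, so `|Im K_p(s)| ≤ p (p - 1) ≤ p ^ 3`.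
-/

open Complex

theorem norm_pow_sub_one_sub_nsmul_le {R : Type*} [SeminormedRing R] {s : R} (hs : ‖s‖ ≤ 1)
    (n : ℕ) : ‖s ^ n - 1 - n • (s - 1)‖ ≤ n * (n - 1) / 2 * ‖s - 1‖ ^ 2 := by
  induction n with
  | zero => simp
  | succ n ih =>
    have step : s ^ (n + 1) - 1 - (n + 1) • (s - 1)
        = s * (s ^ n - 1 - n • (s - 1)) + n • (s - 1) ^ 2 := by
      simp only [pow_succ', pow_zero, mul_sub, mul_one, mul_smul_comm, sub_mul, one_mul, smul_sub,
        succ_nsmul]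
      abel
    rw [step]
    calc ‖s * (s ^ n - 1 - n • (s - 1)) + n • (s - 1) ^ 2‖
        ≤ ‖s‖ * ‖s ^ n - 1 - n • (s - 1)‖ + n * ‖s - 1‖ ^ 2 := by
          refine (norm_add_le _ _).trans (add_le_add (norm_mul_le _ _) ?_)
          exact norm_nsmul_le.trans
            (mul_le_mul_of_nonneg_left (norm_pow_le' _ two_pos) n.cast_nonneg)
      _ ≤ n * (n - 1) / 2 * ‖s - 1‖ ^ 2 + n * ‖s - 1‖ ^ 2 :=
          add_le_add_left ((mul_le_of_le_one_left (norm_nonneg _) hs).trans ih) _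
      _ = (n + 1 : ℕ) * ((n + 1 : ℕ) - 1) / 2 * ‖s - 1‖ ^ 2 := by push_cast; ring

theorem Complex.sq_norm_sub_one_of_norm_eq_one {s : ℂ} (hs : ‖s‖ = 1) :
    ‖s - 1‖ ^ 2 = 2 * (1 - s.re) := by
  have h := Complex.sq_norm s
  rw [hs, normSq_apply] at h
  rw [Complex.sq_norm, normSq_apply]
  simp only [sub_re, sub_im, one_re, one_im]
  linear_combination -h

theorem Complex.abs_im_pow_sub_nat_mul_im_le {s : ℂ} (hs : ‖s‖ = 1) (p : ℕ) :
    |(s ^ p).im - p * s.im| ≤ p * (p - 1) * (1 - s.re) := by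
  have him : (s ^ p - 1 - p • (s - 1)).im = (s ^ p).im - p * s.im := by simp
  calc |(s ^ p).im - p * s.im| = |(s ^ p - 1 - p • (s - 1)).im| := by rw [him]
    _ ≤ ‖s ^ p - 1 - p • (s - 1)‖ := abs_im_le_norm _
    _ ≤ p * (p - 1) / 2 * ‖s - 1‖ ^ 2 := norm_pow_sub_one_sub_nsmul_le hs.le p
    _ = p * (p - 1) * (1 - s.re) := by rw [sq_norm_sub_one_of_norm_eq_one hs]; ring

theorem stmt_4_general (p : ℕ) (s : ℂ) (hs : ‖s‖ = 1) :
    |((s ^ p - 1 - Complex.I * (p : ℂ) * (s.im : ℂ)) / ((1 : ℂ) - (s.re : ℂ))).im|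
      ≤ (p : ℝ) ^ 3 := by
  have hre : 0 ≤ 1 - s.re := sub_nonneg.2 ((re_le_norm s).trans hs.le)
  have hden : (1 : ℂ) - s.re = ((1 - s.re : ℝ) : ℂ) := by push_cast; rfl
  have hnum : (s ^ p - 1 - I * p * s.im).im = (s ^ p).im - p * s.im := by simp
  have hcube : (p : ℝ) * (p - 1) ≤ p ^ 3 := by
    nlinarith [sq_nonneg (p : ℝ), p.cast_nonneg (α := ℝ)]
  rw [hden, div_ofReal_im, hnum, abs_div, abs_of_nonneg hre]
  refine div_le_of_le_mul₀ hre (by positivity) ?_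
  calc |(s ^ p).im - p * s.im| ≤ p * (p - 1) * (1 - s.re) := abs_im_pow_sub_nat_mul_im_le hs p
    _ ≤ p ^ 3 * (1 - s.re) := mul_le_mul_of_nonneg_right hcube hre

theorem stmt_4 (p : ℕ) (hp : 1 ≤ p) (s : ℂ) (hs : ‖s‖ = 1) (hs1 : s ≠ 1) :
    |((s ^ p - 1 - Complex.I * (p : ℂ) * (s.im : ℂ)) / ((1 : ℂ) - (s.re : ℂ))).im|
      ≤ (p : ℝ) ^ 3 :=
  stmt_4_general p s hs
end

section
/- Let a ≥ 0, γ ∈ 𝕋, and let ρ be a finite positive measure on the unit circle 𝕋 with ρ({1}) = 0 and ∫(1 - Re s) dρ(s) < ∞. Define, for n ∈ ℤ, f(n) = γ^n · exp(-(a/2)n² + ∫_𝕋 (s^n - 1 - i n Im s) dρ(s)). Then lim_{n→∞} |f(n)|^{1/n²} = e^{-a/2}. -/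
open Real Complex MeasureTheory Filter Topology

/-! Only the modulus of `f n` matters, and `log ‖f n‖ = -(a/2) n² - ∫ (1 - Re sⁿ) dρ`. Writing
`s = e^{ix}`, the elementary bound `1 - cos (n x) ≤ n² (1 - cos x)` dominates
`(1 - Re sⁿ) / n²` by the integrable function `1 - Re s`, while `(1 - Re sⁿ) / n² ≤ 2 / n² → 0`
pointwise. Dominated convergence makes the jump part negligible on the scale `n²`. -/

theorem norm_one_sub_pow_le {R : Type*} [SeminormedRing R] [NormOneClass R] {s : R}
    (hs : ‖s‖ ≤ 1) (n : ℕ) : ‖1 - s ^ n‖ ≤ n * ‖1 - s‖ := by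
  induction n with
  | zero => simp
  | succ n ih =>
    calc ‖1 - s ^ (n + 1)‖ = ‖(1 - s ^ n) + s ^ n * (1 - s)‖ := by congr 1; noncomm_ring
    _ ≤ ‖1 - s ^ n‖ + ‖s ^ n‖ * ‖1 - s‖ := (norm_add_le _ _).trans (by gcongr; exact norm_mul_le _ _)
    _ ≤ n * ‖1 - s‖ + 1 * ‖1 - s‖ := by
      gcongr
      exact (norm_pow_le _ _).trans (pow_le_one₀ (norm_nonneg _) hs)
    _ = (n + 1 : ℕ) * ‖1 - s‖ := by push_cast; ring

namespace Complex

theorem sq_norm_one_sub_of_norm_eq_one {z : ℂ} (hz : ‖z‖ = 1) : ‖1 - z‖ ^ 2 = 2 * (1 - z.re) := by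
  rw [Complex.sq_norm, normSq_sub, ← Complex.sq_norm z, hz]
  simp only [map_one, one_pow, one_mul, conj_re]
  ring

theorem abs_re_pow_le_one {s : ℂ} (hs : ‖s‖ ≤ 1) (n : ℕ) : |(s ^ n).re| ≤ 1 :=
  (abs_re_le_norm _).trans (by rw [norm_pow]; exact pow_le_one₀ (norm_nonneg _) hs)

theorem one_sub_re_pow_le {s : ℂ} (hs : ‖s‖ = 1) (n : ℕ) :
    1 - (s ^ n).re ≤ n ^ 2 * (1 - s.re) :=
  calc 1 - (s ^ n).re = ‖1 - s ^ n‖ ^ 2 / 2 := by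
        rw [sq_norm_one_sub_of_norm_eq_one (by rw [norm_pow, hs, one_pow])]; ring
  _ ≤ (n * ‖1 - s‖) ^ 2 / 2 := by gcongr; exact norm_one_sub_pow_le hs.le n
  _ = n ^ 2 * (1 - s.re) := by rw [mul_pow, sq_norm_one_sub_of_norm_eq_one hs]; ring

end Complex

section LevyExponent

variable {ρ : Measure ℂ}

theorem integrable_pow_sub_one_sub_I_mul_im [IsFiniteMeasure ρ] (hρ : ∀ᵐ s ∂ρ, ‖s‖ ≤ 1)
    (n : ℕ) : Integrable (fun s : ℂ => s ^ n - 1 - I * n * s.im) ρ := by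
  refine Integrable.of_bound (by fun_prop) (2 + n) ?_
  filter_upwards [hρ] with s hs
  have hpow : ‖s ^ n‖ ≤ 1 := by rw [norm_pow]; exact pow_le_one₀ (norm_nonneg _) hs
  have him : |s.im| ≤ 1 := (abs_im_le_norm s).trans hs
  calc ‖s ^ n - 1 - I * n * s.im‖ ≤ ‖s ^ n‖ + ‖(1 : ℂ)‖ + ‖I * n * s.im‖ :=
        (norm_sub_le _ _).trans (by gcongr; exact norm_sub_le _ _)
  _ = ‖s ^ n‖ + 1 + n * |s.im| := by simp [Complex.norm_real]
  _ ≤ 1 + 1 + n * 1 := by gcongr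
  _ = 2 + n := by ring

theorem re_integral_pow_sub_one_sub_I_mul_im [IsFiniteMeasure ρ] (hρ : ∀ᵐ s ∂ρ, ‖s‖ ≤ 1)
    (n : ℕ) : (∫ s, (s ^ n - 1 - I * n * s.im) ∂ρ).re = -∫ s, (1 - (s ^ n).re) ∂ρ := by
  rw [← RCLike.re_to_complex, ← integral_re (integrable_pow_sub_one_sub_I_mul_im hρ n),
    ← integral_neg]
  congr with s
  simp

theorem tendsto_integral_one_sub_re_pow_div_sq (hρ : ∀ᵐ s ∂ρ, ‖s‖ = 1)
    (hint : Integrable (fun s : ℂ => 1 - s.re) ρ) :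
    Tendsto (fun n : ℕ => (∫ s, (1 - (s ^ n).re) ∂ρ) / n ^ 2) atTop (𝓝 0) := by
  simp_rw [← integral_div]
  rw [← integral_zero ℂ ℝ (μ := ρ)]
  refine tendsto_integral_of_dominated_convergence _ (fun n => by fun_prop) hint
    (fun n => ?_) ?_
  · filter_upwards [hρ] with s hs
    have hre := abs_le.1 (abs_re_pow_le_one hs.le n)
    have hs_re : s.re ≤ 1 := hs ▸ re_le_norm s
    rw [Real.norm_of_nonneg (div_nonneg (by linarith) (by positivity))]
    exact div_le_of_le_mul₀ (by positivity) (by linarith) (by linarith [one_sub_re_pow_le hs n])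
  · filter_upwards [hρ] with s hs
    have hre (n : ℕ) := abs_le.1 (abs_re_pow_le_one hs.le n)
    have hsq : Tendsto (fun n : ℕ => (n : ℝ) ^ 2) atTop atTop :=
      (tendsto_pow_atTop two_ne_zero).comp tendsto_natCast_atTop_atTop
    refine squeeze_zero (fun n => div_nonneg (by linarith [hre n]) (by positivity))
      (fun n => div_le_div_of_nonneg_right (by linarith [hre n]) (by positivity))
      ((tendsto_const_nhds (x := (2 : ℝ))).div_atTop hsq)

end LevyExponent

theorem stmt_12_general (a : ℝ) (γ : ℂ) (hγ : ‖γ‖ = 1)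
    (ρ : Measure ℂ) [IsFiniteMeasure ρ]
    (hcircle : ∀ᵐ s ∂ρ, ‖s‖ = 1)
    (hint : Integrable (fun s : ℂ => 1 - s.re) ρ)
    (f : ℕ → ℂ)
    (hf : ∀ n : ℕ, f n = γ ^ n *
      Complex.exp (-((a : ℂ) / 2) * (n : ℂ) ^ 2 +
        ∫ s : ℂ, (s ^ n - 1 - Complex.I * (n : ℂ) * (s.im : ℂ)) ∂ρ)) :
    Tendsto (fun n : ℕ => ‖f n‖ ^ (((n : ℝ) ^ 2)⁻¹)) atTop (𝓝 (Real.exp (-a / 2))) := by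
  set J : ℕ → ℝ := fun n => ∫ s, (1 - (s ^ n).re) ∂ρ
  have hnorm (n : ℕ) : ‖f n‖ = Real.exp (-(a / 2) * n ^ 2 - J n) := by
    rw [hf n, norm_mul, norm_pow, hγ, one_pow, one_mul, Complex.norm_exp, add_re,
      re_integral_pow_sub_one_sub_I_mul_im (hcircle.mono fun s hs => hs.le)]
    norm_cast
  have hroot (n : ℕ) (hn : n ≠ 0) : ‖f n‖ ^ ((n : ℝ) ^ 2)⁻¹ = Real.exp (-a / 2 - J n / n ^ 2) := by
    rw [hnorm, ← Real.exp_mul]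
    congr 1
    field_simp
  have hlim : Tendsto (fun n : ℕ => Real.exp (-a / 2 - J n / n ^ 2)) atTop
      (𝓝 (Real.exp (-a / 2))) := by
    simpa [J, Function.comp_def] using (Real.continuous_exp.tendsto _).comp
      (tendsto_const_nhds.sub (tendsto_integral_one_sub_re_pow_div_sq hcircle hint))
  exact hlim.congr' ((eventually_ne_atTop 0).mono fun n hn => (hroot n hn).symm)

theorem stmt_12 (a : ℝ) (ha : 0 ≤ a) (γ : ℂ) (hγ : ‖γ‖ = 1)
    (ρ : Measure ℂ) [IsFiniteMeasure ρ]
    (hcircle : ∀ᵐ s ∂ρ, ‖s‖ = 1)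
    (hone : ρ {1} = 0)
    (hint : Integrable (fun s : ℂ => 1 - s.re) ρ)
    (f : ℕ → ℂ)
    (hf : ∀ n : ℕ, f n = γ ^ n *
      Complex.exp (-((a : ℂ) / 2) * (n : ℂ) ^ 2 +
        ∫ s : ℂ, (s ^ n - 1 - Complex.I * (n : ℂ) * (s.im : ℂ)) ∂ρ)) :
    Tendsto (fun n : ℕ => ‖f n‖ ^ (((n : ℝ) ^ 2)⁻¹)) atTop (𝓝 (Real.exp (-a / 2))) :=
  stmt_12_general a γ hγ ρ hcircle hint f hf
end

section
/- For every integer n, exp(π(i^n - 1 - i n)) = exp(π((-i)^n - 1 + i n)); hence the two Lévy triplets (1, 0, πδ_i) and (1, 0, πδ_{-i}) define the same ⊛-infinitely divisible distribution on the circle, i.e., the characteristic functions n ↦ exp(∫(s^n - 1 - i n Im s) d(πδ_i)(s)) and n ↦ exp(∫(s^n - 1 - i n Im s) d(πδ_{-i})(s)) coincide. -/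
open Real Complex MeasureTheory

lemma I_zpow_four_mul (q : ℤ) : Complex.I ^ (4 * q : ℤ) = 1 := by
  rw [zpow_mul, show (4:ℤ) = ((4:ℕ):ℤ) from rfl, zpow_natCast]
  simp [pow_succ, Complex.I_mul_I]

lemma neg_I_zpow_four_mul (q : ℤ) : (-Complex.I) ^ (4 * q : ℤ) = 1 := by
  rw [zpow_mul, show (4:ℤ) = ((4:ℕ):ℤ) from rfl, zpow_natCast]
  simp [pow_succ, Complex.I_mul_I]

lemma key (n : ℤ) : Complex.exp ((π : ℂ) * (Complex.I ^ n - 1 - Complex.I * n)) =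
    Complex.exp ((π : ℂ) * ((-Complex.I) ^ n - 1 + Complex.I * n)) := by
  have hI : (Complex.I : ℂ) ≠ 0 := Complex.I_ne_zero
  have hnI : (-Complex.I : ℂ) ≠ 0 := neg_ne_zero.mpr hI
  obtain ⟨q, r, hr, rfl⟩ : ∃ q r : ℤ, (r = 0 ∨ r = 1 ∨ r = 2 ∨ r = 3) ∧ n = 4 * q + r :=
    ⟨n / 4, n % 4, by omega, by omega⟩
  have e2 : Complex.I ^ (2:ℤ) = -1 := by
    rw [show (2:ℤ) = ((2:ℕ):ℤ) from rfl, zpow_natCast]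
    simp [pow_succ, Complex.I_mul_I]
  have e3 : Complex.I ^ (3:ℤ) = -Complex.I := by
    rw [show (3:ℤ) = ((3:ℕ):ℤ) from rfl, zpow_natCast]
    simp [pow_succ, Complex.I_mul_I]
  have f2 : (-Complex.I) ^ (2:ℤ) = -1 := by
    rw [show (2:ℤ) = ((2:ℕ):ℤ) from rfl, zpow_natCast]
    simp [pow_succ, Complex.I_mul_I]
  have f3 : (-Complex.I) ^ (3:ℤ) = Complex.I := by
    rw [show (3:ℤ) = ((3:ℕ):ℤ) from rfl, zpow_natCast]
    simp [pow_succ, Complex.I_mul_I]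
  rw [zpow_add₀ hI, zpow_add₀ hnI, I_zpow_four_mul, neg_I_zpow_four_mul, one_mul, one_mul]
  rw [Complex.exp_eq_exp_iff_exists_int]
  rcases hr with rfl | rfl | rfl | rfl
  · exact ⟨-4 * q, by rw [zpow_zero, zpow_zero]; push_cast; ring⟩
  · exact ⟨-4 * q, by rw [zpow_one, zpow_one]; push_cast; ring⟩
  · exact ⟨-(4 * q + 2), by rw [e2, f2]; push_cast; ring⟩
  · exact ⟨-(4 * q + 4), by rw [e3, f3]; push_cast; ring⟩

theorem stmt_14 :
    (∀ n : ℤ, Complex.exp ((π : ℂ) * (Complex.I ^ n - 1 - Complex.I * n)) =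
        Complex.exp ((π : ℂ) * ((-Complex.I) ^ n - 1 + Complex.I * n))) ∧
      ∀ n : ℤ,
        Complex.exp (∫ s : ℂ, (s ^ n - 1 - Complex.I * (n : ℂ) * (s.im : ℂ))
            ∂((ENNReal.ofReal π) • Measure.dirac Complex.I)) =
          Complex.exp (∫ s : ℂ, (s ^ n - 1 - Complex.I * (n : ℂ) * (s.im : ℂ))
            ∂((ENNReal.ofReal π) • Measure.dirac (-Complex.I))) := by
  refine ⟨key, fun n => ?_⟩
  have h : ∀ a : ℂ, (∫ s : ℂ, (s ^ n - 1 - Complex.I * (n : ℂ) * (s.im : ℂ))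
      ∂((ENNReal.ofReal π) • Measure.dirac a)) =
      (π : ℂ) * (a ^ n - 1 - Complex.I * (n : ℂ) * (a.im : ℂ)) := by
    intro a
    rw [MeasureTheory.integral_smul_measure, MeasureTheory.integral_dirac,
      ENNReal.toReal_ofReal Real.pi_pos.le, Complex.real_smul]
  rw [h, h]
  have := key n
  simp only [Complex.I_im, Complex.neg_im, Complex.ofReal_one, Complex.ofReal_neg] at *
  convert this using 3 <;> ring
end

section
/- Let φ ∈ (0, π) with cos φ irrational, and let t be a real number such that t·(sin(2φ) - 2 sin φ) ∈ πℤ and t·(sin(3φ) - 3 sin φ) ∈ πℤ. Then t = 0. -/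
open Real

theorem stmt_16 (φ : ℝ) (hφ : φ ∈ Set.Ioo 0 π) (hirr : Irrational (Real.cos φ))
    (t : ℝ)
    (h2 : ∃ ℓ : ℤ, t * (Real.sin (2 * φ) - 2 * Real.sin φ) = π * ℓ)
    (h3 : ∃ m : ℤ, t * (Real.sin (3 * φ) - 3 * Real.sin φ) = π * m) :
    t = 0 := by
  obtain ⟨ℓ, hℓ⟩ := h2
  obtain ⟨m, hm⟩ := h3
  have hsin : Real.sin φ > 0 := Real.sin_pos_of_pos_of_lt_pi hφ.1 hφ.2
  have hs2 : Real.sin (2 * φ) = 2 * Real.sin φ * Real.cos φ := Real.sin_two_mul φ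
  have hs3 : Real.sin (3 * φ) = 3 * Real.sin φ - 4 * Real.sin φ ^ 3 := Real.sin_three_mul φ
  have hpyth : Real.sin φ ^ 2 = 1 - Real.cos φ ^ 2 := by
    have := Real.sin_sq_add_cos_sq φ; linarith
  have key : Real.sin (3 * φ) - 3 * Real.sin φ
      = 2 * (Real.cos φ + 1) * (Real.sin (2 * φ) - 2 * Real.sin φ) := by
    rw [hs2, hs3]
    have : Real.sin φ ^ 3 = Real.sin φ * Real.sin φ ^ 2 := by ring
    rw [this, hpyth]; ring
  have hrel : (π : ℝ) * m = 2 * (Real.cos φ + 1) * (π * ℓ) := by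
    rw [← hℓ, ← hm, key]; ring
  have hπ : (π : ℝ) ≠ 0 := Real.pi_ne_zero
  have hℓ0 : ℓ = 0 := by
    by_contra hne
    have hℓr : (ℓ : ℝ) ≠ 0 := Int.cast_ne_zero.mpr hne
    have : Real.cos φ = m / (2 * ℓ) - 1 := by
      field_simp at hrel ⊢
      nlinarith [hrel, Real.pi_pos]
    exact hirr ⟨(m : ℚ) / (2 * ℓ) - 1, by push_cast [this]; ring⟩
  rw [hℓ0] at hℓ
  have hne : Real.sin (2 * φ) - 2 * Real.sin φ ≠ 0 := by
    rw [hs2]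
    have hc : Real.cos φ < 1 :=
      lt_of_le_of_ne (Real.cos_le_one φ) (by simpa using hirr.ne_int 1)
    nlinarith
  have := hℓ
  push_cast at this
  simp at this
  rcases this with h | h
  · exact h
  · exact absurd h hne
end

section
/- Let φ ∈ (0, π) with cos φ irrational, and let c, d, c', d' ≥ 0 with c + d = c' + d'. If for every positive integer n one has (c - c')·(sin(nφ) - n sin φ) ∈ πℤ, then c = c' and d = d'. -/
open Real

theorem stmt_18 (φ : ℝ) (hφ : φ ∈ Set.Ioo 0 π) (hirr : Irrational (Real.cos φ))
    (c d c' d' : ℝ) (hc : 0 ≤ c) (hd : 0 ≤ d) (hc' : 0 ≤ c') (hd' : 0 ≤ d')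
    (hsum : c + d = c' + d')
    (h : ∀ n : ℕ, 1 ≤ n →
      ∃ k : ℤ, (c - c') * (Real.sin (n * φ) - n * Real.sin φ) = π * k) :
    c = c' ∧ d = d' := by
  obtain ⟨hφ0, hφπ⟩ := hφ
  have hsin : Real.sin φ > 0 := Real.sin_pos_of_pos_of_lt_pi hφ0 hφπ
  have hcos1 : Real.cos φ ≠ 1 := fun hh => by
    rw [hh] at hirr; exact hirr ⟨1, by norm_num⟩
  obtain ⟨k₂, hk₂⟩ := h 2 (by norm_num)
  obtain ⟨k₃, hk₃⟩ := h 3 (by norm_num)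
  rw [show ((2:ℕ):ℝ) * φ = 2 * φ by norm_num, Real.sin_two_mul] at hk₂
  rw [show ((3:ℕ):ℝ) * φ = 3 * φ by norm_num, Real.sin_three_mul] at hk₃
  have hpi : π > 0 := Real.pi_pos
  have hsq : Real.sin φ ^ 2 = 1 - Real.cos φ ^ 2 := by
    have := Real.sin_sq_add_cos_sq φ; nlinarith
  -- key identity: π * k₃ = 2 (cos φ + 1) * (π * k₂)
  have key : π * (k₃ : ℝ) = 2 * (Real.cos φ + 1) * (π * k₂) := by
    rw [← hk₂, ← hk₃]; push_cast
    linear_combination (-4 * (c - c') * Real.sin φ) * hsq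
  have hcc : c = c' := by
    by_cases hk : (k₂ : ℝ) = 0
    · -- then (c - c') * (2 sinφ cosφ - 2 sinφ) = 0
      rw [hk, mul_zero] at hk₂
      have hfac : 2 * Real.sin φ * Real.cos φ - 2 * Real.sin φ ≠ 0 := by
        have : 2 * Real.sin φ * Real.cos φ - 2 * Real.sin φ
            = 2 * Real.sin φ * (Real.cos φ - 1) := by ring
        rw [this]
        exact mul_ne_zero (by positivity) (sub_ne_zero.mpr hcos1)
      have := mul_eq_zero.mp hk₂
      rcases this with h0 | h0
      · linarith [sub_eq_zero.mp h0]
      · exact absurd h0 hfac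
    · -- cos φ would be rational
      exfalso
      apply hirr
      refine ⟨(k₃ : ℚ) / (2 * k₂) - 1, ?_⟩
      have hk2 : (2 : ℝ) * k₂ ≠ 0 := by
        simpa using mul_ne_zero two_ne_zero hk
      have hkk : (k₃ : ℝ) = 2 * (Real.cos φ + 1) * k₂ := by
        have := key
        field_simp at this ⊢
        nlinarith [hpi, this]
      push_cast
      rw [hkk]
      field_simp
      ring
  exact ⟨hcc, by linarith⟩
end

section
/- For every integer ℓ and every integer n, the number (sin(nπ/2) - n)·(ℓ/2) is an integer. Consequently, for α = i and any c, d ≥ 0, the Lévy measures cδ_i + dδ_{-i} and (c - πℓ/2)δ_i + (d + πℓ/2)δ_{-i} (when both coefficients are nonnegative) yield the same ⊛-infinitely divisible distribution on the circle. -/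
open Real Complex MeasureTheory

lemma mydirac {f : ℂ → ℂ} (hf : Measurable f) (a : ℂ) : Integrable f (Measure.dirac a) := by
  refine ⟨hf.aestronglyMeasurable, ?_⟩
  rw [HasFiniteIntegral, lintegral_dirac' _ (by fun_prop)]
  simp

lemma intpair {f : ℂ → ℂ} (hf : Measurable f) (c d : ℝ) (hc : 0 ≤ c) (hd : 0 ≤ d) :
    ∫ s, f s ∂(ENNReal.ofReal c • Measure.dirac Complex.I +
      ENNReal.ofReal d • Measure.dirac (-Complex.I)) = c • f Complex.I + d • f (-Complex.I) := by
  rw [integral_add_measure ((mydirac hf Complex.I).smul_measure ENNReal.ofReal_ne_top)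
      ((mydirac hf (-Complex.I)).smul_measure ENNReal.ofReal_ne_top),
    integral_smul_measure, integral_smul_measure, integral_dirac, integral_dirac,
    ENNReal.toReal_ofReal hc, ENNReal.toReal_ofReal hd]

lemma sin_sub_even (n : ℤ) : ∃ m : ℤ, Real.sin (n * π / 2) - n = 2 * m := by
  rcases Int.even_or_odd n with ⟨k, hk⟩ | ⟨k, hk⟩
  · refine ⟨-k, ?_⟩
    have : (n : ℝ) * π / 2 = k * π := by rw [hk]; push_cast; ring
    rw [this, Real.sin_int_mul_pi]
    rw [hk]; push_cast; ring
  · have : (n : ℝ) * π / 2 = k * π + π / 2 := by rw [hk]; push_cast; ring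
    rw [this, Real.sin_add, Real.sin_int_mul_pi, Real.sin_pi_div_two, Real.cos_pi_div_two]
    have hcos : Real.cos (k * π) = (-1) ^ k := by
      rcases Int.even_or_odd k with ⟨j, hj⟩ | ⟨j, hj⟩
      · have : (k : ℝ) * π = j * (2 * π) := by rw [hj]; push_cast; ring
        rw [this, Real.cos_int_mul_two_pi, hj]
        rw [(by omega : j + j = 2 * j), zpow_mul]; norm_num
      · have : (k : ℝ) * π = π + j * (2 * π) := by rw [hj]; push_cast; ring
        rw [this, Real.cos_add_int_mul_two_pi, Real.cos_pi, hj]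
        rw [(by omega : 2 * j + 1 = 2 * j + 1), zpow_add₀ (by norm_num : (-1:ℝ) ≠ 0), zpow_mul]
        norm_num
    rcases Int.even_or_odd k with ⟨j, hj⟩ | ⟨j, hj⟩
    · refine ⟨-k, ?_⟩
      have hek : (-1:ℝ) ^ k = 1 := by
        rw [hj, (by omega : j + j = 2 * j), zpow_mul]; norm_num
      rw [hcos, hek, hk]; push_cast; ring
    · refine ⟨-k - 1, ?_⟩
      have hek : (-1:ℝ) ^ k = -1 := by
        rw [hj, zpow_add₀ (by norm_num : (-1:ℝ) ≠ 0), zpow_mul]; norm_num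
      rw [hcos, hek, hk]; push_cast; ring

lemma I_zpow (n : ℤ) : Complex.I ^ n =
    Complex.cos ((n : ℝ) * π / 2) + Complex.sin ((n : ℝ) * π / 2) * Complex.I := by
  have e1 : Complex.exp (((π / 2 : ℝ) : ℂ) * Complex.I) = Complex.I := by
    rw [Complex.exp_mul_I, ← Complex.ofReal_cos, ← Complex.ofReal_sin,
      Real.cos_pi_div_two, Real.sin_pi_div_two]; simp
  calc Complex.I ^ n = Complex.exp (((π / 2 : ℝ) : ℂ) * Complex.I) ^ n := by rw [e1]
    _ = Complex.exp ((n : ℂ) * (((π / 2 : ℝ) : ℂ) * Complex.I)) := (Complex.exp_int_mul _ n).symm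
    _ = Complex.exp ((((n : ℝ) * π / 2 : ℝ) : ℂ) * Complex.I) := by push_cast; ring_nf
    _ = _ := by rw [Complex.exp_mul_I]; push_cast; ring_nf

lemma negI_zpow (n : ℤ) : (-Complex.I) ^ n =
    Complex.cos ((n : ℝ) * π / 2) - Complex.sin ((n : ℝ) * π / 2) * Complex.I := by
  have e1 : Complex.exp ((((-π) / 2 : ℝ) : ℂ) * Complex.I) = -Complex.I := by
    rw [Complex.exp_mul_I, ← Complex.ofReal_cos, ← Complex.ofReal_sin]
    rw [(by ring : (-π)/2 = -(π/2)), Real.cos_neg, Real.sin_neg,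
      Real.cos_pi_div_two, Real.sin_pi_div_two]; simp
  calc (-Complex.I) ^ n = Complex.exp ((((-π) / 2 : ℝ) : ℂ) * Complex.I) ^ n := by rw [e1]
    _ = Complex.exp ((n : ℂ) * ((((-π) / 2 : ℝ) : ℂ) * Complex.I)) := (Complex.exp_int_mul _ n).symm
    _ = Complex.exp (((-((n : ℝ) * π / 2) : ℝ) : ℂ) * Complex.I) := by push_cast; ring_nf
    _ = _ := by rw [Complex.exp_mul_I]; push_cast; rw [Complex.cos_neg, Complex.sin_neg]; ring

theorem stmt_19 :
    (∀ ℓ n : ℤ, ∃ k : ℤ, (Real.sin (n * π / 2) - n) * ((ℓ : ℝ) / 2) = (k : ℝ)) ∧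
      ∀ (ℓ : ℤ) (c d : ℝ), 0 ≤ c → 0 ≤ d →
        0 ≤ c - π * ℓ / 2 → 0 ≤ d + π * ℓ / 2 →
        ∀ n : ℤ,
          Complex.exp (∫ s : ℂ, (s ^ n - 1 - Complex.I * (n : ℂ) * (s.im : ℂ))
              ∂(ENNReal.ofReal c • Measure.dirac Complex.I +
                ENNReal.ofReal d • Measure.dirac (-Complex.I))) =
            Complex.exp (∫ s : ℂ, (s ^ n - 1 - Complex.I * (n : ℂ) * (s.im : ℂ))
              ∂(ENNReal.ofReal (c - π * ℓ / 2) • Measure.dirac Complex.I +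
                ENNReal.ofReal (d + π * ℓ / 2) • Measure.dirac (-Complex.I))) := by
  constructor
  · intro ℓ n
    obtain ⟨m, hm⟩ := sin_sub_even n
    exact ⟨m * ℓ, by rw [hm]; push_cast; ring⟩
  · intro ℓ c d hc hd hc' hd' n
    have hf : Measurable (fun s : ℂ => s ^ n - 1 - Complex.I * (n : ℂ) * (s.im : ℂ)) := by
      fun_prop
    rw [intpair hf c d hc hd, intpair hf _ _ hc' hd']
    obtain ⟨m, hm⟩ := sin_sub_even n
    rw [Complex.exp_eq_exp_iff_exists_int]
    refine ⟨m * ℓ, ?_⟩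
    have hAB : (Complex.I ^ n - 1 - Complex.I * (n : ℂ) * ((Complex.I.im : ℝ) : ℂ)) -
        ((-Complex.I) ^ n - 1 - Complex.I * (n : ℂ) * (((-Complex.I).im : ℝ) : ℂ)) =
        2 * Complex.I * (((Real.sin ((n : ℝ) * π / 2) : ℝ) : ℂ) - (n : ℂ)) := by
      rw [I_zpow, negI_zpow, Complex.ofReal_sin]
      simp [Complex.I_im]
      ring
    have hmC : ((Real.sin ((n : ℝ) * π / 2) : ℝ) : ℂ) - (n : ℂ) = 2 * (m : ℂ) := by
      exact_mod_cast congrArg (fun x : ℝ => (x : ℂ)) hm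
    simp only [Complex.real_smul]
    push_cast
    linear_combination ((π : ℂ) * ℓ / 2) * hAB + (π : ℂ) * ℓ * Complex.I * hmC
end
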